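/- arXiv:1410.0732 — 3 statements merged into one kernel-verified Lean document; each statement's English description precedes it below -/
import Mathlib

section
/- Let (R, m, k) be a commutative Noetherian local non-Gorenstein ring with m^3 = 0 and m^2 ≠ 0, and let M be a finitely generated R-module. If for some n ≥ 0 the n-th syzygy Ω^n_R(M) of M in a minimal free resolution contains a copy of the residue field k as a direct summand (i.e., Ω^n_R(M) ≅ k ⊕ X for some R-module X), then M is not totally reflexive. -/
open CategoryTheory IsLocalRing

/-- The `i`-th Ext module `Ext^i_R(M, N)`. -/
noncomputable def extMod (R : Type) [CommRing R] (M N : Type) [AddCommGroup M] [Module R M]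
    [AddCommGroup N] [Module R N] (i : ℕ) : ModuleCat R :=
  ((Ext R (ModuleCat R) i).obj (Opposite.op (ModuleCat.of R M))).obj (ModuleCat.of R N)

/-- A finitely generated module `M` over a commutative ring `R` is totally reflexive if the
biduality map `M → Hom_R(Hom_R(M,R),R)` is an isomorphism and
`Ext^i_R(M,R) = 0 = Ext^i_R(Hom_R(M,R),R)` for all `i > 0`. -/
def IsTotallyReflexive (R : Type) [CommRing R] (M : Type) [AddCommGroup M] [Module R M] : Prop :=
  Module.Finite R M ∧
  Function.Bijective (Module.Dual.eval R M) ∧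
  (∀ i : ℕ, 0 < i → Subsingleton (extMod R M R i)) ∧
  (∀ i : ℕ, 0 < i → Subsingleton (extMod R (Module.Dual R M) R i))

/-!
Total reflexivity gives `Ext^{n+1}_R(M, R) = 0`. Read off the resolution `F_i = R^{rk i}`, this
says that every functional on `F_{n+1}` vanishing on `ker d_n` factors through `d_n`, which is the
vanishing of `Ext^1_R(Ωⁿ M, R)`. As `k` is a direct summand of `Ωⁿ M`, it forces
`Ext^1_R(k, R) = 0`, i.e. every map `𝔪 → R` is multiplication by an element of `R`. Since `𝔪` is
nilpotent, every proper ideal `I` contains `𝔪 x` for some `x ∉ I`, so a map `I → R` extends to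
`I + R x`; by Noetherian induction it extends to `R`, and Baer's criterion makes `R`
self-injective, i.e. Gorenstein.
-/

section Resolution

variable {R : Type} [CommRing R] {M : Type} [AddCommGroup M] [Module R M]
  (F : ℕ → Type) [∀ i, AddCommGroup (F i)] [∀ i, Module R (F i)]
  {d : ∀ i, F (i + 1) →ₗ[R] F i} {ε : F 0 →ₗ[R] M}

noncomputable def resolutionComplex
    (hexact : ∀ i, LinearMap.range (d (i + 1)) = LinearMap.ker (d i)) :
    ChainComplex (ModuleCat R) ℕ :=
  ChainComplex.of (fun i => ModuleCat.of R (F i)) (fun i => ModuleCat.ofHom (d i))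
    fun i => ModuleCat.hom_ext (LinearMap.range_le_ker_iff.mp (hexact i).le)

theorem resolutionComplex_d (hexact : ∀ i, LinearMap.range (d (i + 1)) = LinearMap.ker (d i))
    (i : ℕ) : (resolutionComplex F hexact).d (i + 1) i = ModuleCat.ofHom (d i) :=
  ChainComplex.of_d (fun i => ModuleCat.of R (F i)) (fun i => ModuleCat.ofHom (d i)) i

variable [∀ i, Module.Projective R (F i)]

noncomputable def projectiveResolutionOfExact (hε : Function.Surjective ε)
    (hexact0 : LinearMap.range (d 0) = LinearMap.ker ε)
    (hexact : ∀ i, LinearMap.range (d (i + 1)) = LinearMap.ker (d i)) :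
    ProjectiveResolution (ModuleCat.of R M) where
  complex := resolutionComplex F hexact
  projective i := (IsProjective.iff_projective _).mp (inferInstanceAs (Module.Projective R (F i)))
  π := (ChainComplex.toSingle₀Equiv _ _).symm ⟨ModuleCat.ofHom ε, by
    rw [resolutionComplex_d]
    exact ModuleCat.hom_ext (LinearMap.range_le_ker_iff.mp hexact0.le)⟩
  quasiIso := ⟨fun i => by
    cases i with
    | zero =>
      rw [ChainComplex.quasiIsoAt₀_iff, ShortComplex.quasiIso_iff_of_zeros' _ rfl rfl rfl]
      have w : ModuleCat.ofHom (d 0) ≫ ModuleCat.ofHom ε = 0 :=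
        ModuleCat.hom_ext (LinearMap.range_le_ker_iff.mp hexact0.le)
      refine (ShortComplex.exact_and_epi_g_iff_of_iso ?_).2
        ⟨(ShortComplex.moduleCat_exact_iff_range_eq_ker (ShortComplex.mk _ _ w)).mpr hexact0,
          (ModuleCat.epi_iff_surjective _).2 hε⟩
      exact ShortComplex.isoMk (Iso.refl _) (Iso.refl _) (Iso.refl _)
        (resolutionComplex_d F hexact 0).symm rfl
    | succ i =>
      rw [quasiIsoAt_iff_exactAt' _ _ (ChainComplex.exactAt_succ_single_obj _ _),
        HomologicalComplex.exactAt_iff' _ (i + 2) (i + 1) i (by simp) (by simp),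
        ShortComplex.moduleCat_exact_iff_range_eq_ker]
      change LinearMap.range ((resolutionComplex F hexact).d (i + 2) (i + 1)).hom
        = LinearMap.ker ((resolutionComplex F hexact).d (i + 1) i).hom
      rw [resolutionComplex_d, resolutionComplex_d]
      exact hexact i⟩

theorem exists_comp_eq_of_subsingleton_extMod (hε : Function.Surjective ε)
    (hexact0 : LinearMap.range (d 0) = LinearMap.ker ε)
    (hexact : ∀ i, LinearMap.range (d (i + 1)) = LinearMap.ker (d i)) (j : ℕ)
    (hExt : Subsingleton (extMod R M R (j + 1))) (φ : F (j + 1) →ₗ[R] R)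
    (hφ : LinearMap.ker (d j) ≤ LinearMap.ker φ) :
    ∃ ψ : F j →ₗ[R] R, φ = ψ ∘ₗ d j := by
  let P := projectiveResolutionOfExact F hε hexact0 hexact
  have hd (i : ℕ) : P.complex.d (i + 1) i = ModuleCat.ofHom (d i) := resolutionComplex_d F hexact i
  have hP : (P.complex.linearYonedaObj R (ModuleCat.of R R)).ExactAt (j + 1) := by
    have hzero : Limits.IsZero (extMod R M R (j + 1)) := ModuleCat.isZero_of_subsingleton _
    rw [HomologicalComplex.exactAt_iff_isZero_homology]
    exact hzero.of_iso (P.isoExt (j + 1) (ModuleCat.of R R)).symm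
  rw [HomologicalComplex.exactAt_iff' _ j (j + 1) (j + 2) (by simp) (by simp),
    ShortComplex.moduleCat_exact_iff_range_eq_ker] at hP
  let φ' : P.complex.X (j + 1) ⟶ ModuleCat.of R R := ModuleCat.ofHom φ
  have hcocycle : φ' ∈
      LinearMap.ker ((P.complex.linearYonedaObj R (ModuleCat.of R R)).sc' j (j + 1) (j + 2)).g.hom := by
    change P.complex.d (j + 2) (j + 1) ≫ φ' = 0
    rw [hd]
    refine ModuleCat.hom_ext (LinearMap.range_le_ker_iff.mp ?_)
    exact (hexact j).le.trans hφ
  obtain ⟨ψ, hψ⟩ := hP ▸ hcocycle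
  change P.complex.d (j + 1) j ≫ (ψ : P.complex.X j ⟶ ModuleCat.of R R) = φ' at hψ
  rw [hd] at hψ
  exact ⟨ψ.hom, (congrArg ModuleCat.Hom.hom hψ).symm⟩

end Resolution

section ResidueFieldSummand

variable {R : Type*} [CommRing R] [IsLocalRing R] {Ω X F₀ F₁ : Type*}
  [AddCommGroup Ω] [Module R Ω] [AddCommGroup X] [Module R X]
  [AddCommGroup F₀] [Module R F₀] [AddCommGroup F₁] [Module R F₁]

theorem exists_functional_of_residueField_summand [Module.Projective R F₀]
    (e : Ω ≃ₗ[R] ResidueField R × X) {s : F₀ →ₗ[R] Ω} (hs : Function.Surjective s) :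
    ∃ (u : F₀ →ₗ[R] R) (y₀ : F₀), u y₀ = 1 ∧ (∀ c ∈ maximalIdeal R, c • y₀ ∈ LinearMap.ker s) ∧
      ∀ y ∈ LinearMap.ker s, u y ∈ maximalIdeal R := by
  obtain ⟨u, hu⟩ := Module.projective_lifting_property (maximalIdeal R).mkQ
    ((LinearMap.fst R _ X ∘ₗ e.toLinearMap) ∘ₗ s) (maximalIdeal R).mkQ_surjective
  have hu' (y : F₀) : residue R (u y) = (e (s y)).1 := LinearMap.congr_fun hu y
  obtain ⟨y₀, hy₀⟩ := hs (e.symm (1, 0))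
  have hunit : IsUnit (u y₀) := by
    rw [← residue_ne_zero_iff_isUnit, hu', hy₀, LinearEquiv.apply_symm_apply]
    exact one_ne_zero
  refine ⟨hunit.unit⁻¹.val • u, y₀, hunit.val_inv_mul, fun c hc => ?_, fun y hy => ?_⟩
  · rw [LinearMap.mem_ker, map_smul, hy₀, ← map_smul, Prod.smul_mk, smul_zero,
      Algebra.smul_def, mul_one, ResidueField.algebraMap_eq, (residue_eq_zero_iff c).mpr hc]
    exact e.symm.map_zero
  · rw [LinearMap.smul_apply, smul_eq_mul]
    refine Ideal.mul_mem_left _ _ ((residue_eq_zero_iff _).mp ?_)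
    rw [hu', LinearMap.mem_ker.mp hy, map_zero]
    rfl

theorem exists_mul_eq_of_residueField_summand [Module.Projective R F₀]
    (e : Ω ≃ₗ[R] ResidueField R × X) {s : F₀ →ₗ[R] Ω} (hs : Function.Surjective s)
    {δ : F₁ →ₗ[R] F₀} (hδ : LinearMap.range δ = LinearMap.ker s)
    (hdual : ∀ φ : F₁ →ₗ[R] R, LinearMap.ker δ ≤ LinearMap.ker φ → ∃ ψ : F₀ →ₗ[R] R, φ = ψ ∘ₗ δ)
    (f : maximalIdeal R →ₗ[R] R) : ∃ r : R, ∀ x, f x = x * r := by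
  obtain ⟨u, y₀, huy₀, hy₀, hu⟩ := exists_functional_of_residueField_summand e hs
  have huδ (z : F₁) : u (δ z) ∈ maximalIdeal R := hu _ (hδ ▸ LinearMap.mem_range_self δ z)
  obtain ⟨ψ, hψ⟩ := hdual (f ∘ₗ (u ∘ₗ δ).codRestrict _ huδ) fun z hz => by
    have h0 : (u ∘ₗ δ).codRestrict _ huδ z = 0 := Subtype.ext (by simp [LinearMap.mem_ker.mp hz])
    rw [LinearMap.mem_ker, LinearMap.comp_apply, h0, map_zero]
  refine ⟨ψ y₀, fun x => ?_⟩
  obtain ⟨z, hz⟩ : x.1 • y₀ ∈ LinearMap.range δ := hδ ▸ hy₀ x x.2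
  calc f x = f ⟨u (δ z), huδ z⟩ := by congr; simp [hz, huy₀]
    _ = ψ (δ z) := LinearMap.congr_fun hψ z
    _ = x * ψ y₀ := by rw [hz, map_smul, smul_eq_mul]

end ResidueFieldSummand

theorem Ideal.exists_notMem_forall_mul_mem_of_pow_le {R : Type*} [CommSemiring R]
    {I J : Ideal R} (hI : I ≠ ⊤) {n : ℕ} (hn : J ^ n ≤ I) :
    ∃ x ∉ I, ∀ c ∈ J, c * x ∈ I := by
  induction n with
  | zero => exact absurd (top_le_iff.mp (by simpa using hn)) hI
  | succ n ih =>
    by_cases hle : J ^ n ≤ I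
    · exact ih hle
    obtain ⟨x, hxJ, hxI⟩ := SetLike.not_le_iff_exists.mp hle
    exact ⟨x, hxI, fun c hc => hn (pow_succ' J n ▸ Ideal.mul_mem_mul hc hxJ)⟩

theorem exists_extension_to_sup_span_singleton {R : Type*} [CommRing R] [IsLocalRing R]
    (hext : ∀ f : maximalIdeal R →ₗ[R] R, ∃ r : R, ∀ x, f x = x * r)
    {I : Ideal R} (g : I →ₗ[R] R) {x : R} (hxI : x ∉ I) (hmx : ∀ c ∈ maximalIdeal R, c * x ∈ I) :
    ∃ p : R →ₗ.[R] R, p.domain = I ⊔ R ∙ x ∧ ⟨I, g⟩ ≤ p := by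
  have hmem {c : R} (hc : c * x ∈ I) : c ∈ maximalIdeal R := by
    by_contra hu
    exact hxI ((Ideal.unit_mul_mem_iff_mem I (notMem_maximalIdeal.mp hu)).mp hc)
  obtain ⟨r, hr⟩ := hext (g ∘ₗ ((LinearMap.mulRight R x).domRestrict _).codRestrict I
    fun c => hmx c c.2)
  have hgr {c : R} (hc : c * x ∈ I) : g ⟨c * x, hc⟩ = c * r := hr ⟨c, hmem hc⟩
  let q : R →ₗ.[R] R := LinearPMap.mkSpanSingleton' x r fun c hc => by
    rw [smul_eq_mul] at hc
    rw [RingHom.id_apply, smul_eq_mul, ← hgr (hc ▸ I.zero_mem)]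
    simp only [hc]
    exact map_zero g
  have hagree (y : I) (z : q.domain) (hyz : (y : R) = z) : g y = q z := by
    obtain ⟨z, hz⟩ := z
    obtain ⟨c, rfl⟩ := Submodule.mem_span_singleton.mp hz
    replace hyz : (y : R) = c * x := hyz
    rw [LinearPMap.mkSpanSingleton'_apply, RingHom.id_apply, smul_eq_mul, ← hgr (hyz ▸ y.2)]
    exact congrArg g (Subtype.ext hyz)
  exact ⟨LinearPMap.sup ⟨I, g⟩ q hagree, rfl, LinearPMap.left_le_sup _ _ _⟩

theorem Module.Baer.of_forall_maximalIdeal {R : Type*} [CommRing R] [IsNoetherianRing R]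
    [IsLocalRing R] (hm : IsNilpotent (maximalIdeal R))
    (hext : ∀ f : maximalIdeal R →ₗ[R] R, ∃ r : R, ∀ x, f x = x * r) :
    Module.Baer R R := by
  obtain ⟨n, hn⟩ := hm
  intro I
  induction I using IsNoetherian.induction with | hgt I IH => ?_
  intro g
  by_cases hI : I = ⊤
  · subst hI
    exact ⟨g ∘ₗ LinearMap.id.codRestrict ⊤ fun _ => trivial, fun _ _ => rfl⟩
  obtain ⟨x, hxI, hmx⟩ :=
    Ideal.exists_notMem_forall_mul_mem_of_pow_le hI (J := maximalIdeal R) (n := n) (by simp [hn])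
  obtain ⟨p, hp, hgp⟩ := exists_extension_to_sup_span_singleton hext g hxI hmx
  have hIp : I < p.domain := hp ▸ lt_of_le_of_ne le_sup_left fun h =>
    hxI (h ▸ Submodule.mem_sup_right (Submodule.mem_span_singleton_self x))
  obtain ⟨G, hG⟩ := IH p.domain hIp p.toFun
  exact ⟨G, fun y hy => (hG y (hgp.1 hy)).trans (hgp.2 rfl).symm⟩

theorem statement1_general
    (R : Type) [CommRing R] [IsNoetherianRing R] [IsLocalRing R]
    (hGor : ¬ Module.Injective R R)
    (h3 : (maximalIdeal R) ^ 3 = ⊥)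
    (M : Type) [AddCommGroup M] [Module R M]
    (rk : ℕ → ℕ)
    (d : (i : ℕ) → ((Fin (rk (i + 1)) → R) →ₗ[R] (Fin (rk i) → R)))
    (ε : (Fin (rk 0) → R) →ₗ[R] M)
    (hε : Function.Surjective ε)
    (hexact0 : LinearMap.range (d 0) = LinearMap.ker ε)
    (hexact : ∀ i : ℕ, LinearMap.range (d (i + 1)) = LinearMap.ker (d i))
    (n : ℕ) (X : Type) [AddCommGroup X] [Module R X]
    (hsyz : (n = 0 ∧ Nonempty (M ≃ₗ[R] (ResidueField R × X))) ∨
      (∃ m : ℕ, n = m + 1 ∧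
        Nonempty ((LinearMap.range (d m)) ≃ₗ[R] (ResidueField R × X)))) :
    ¬ IsTotallyReflexive R M := by
  rintro ⟨-, -, hExt, -⟩
  have hdual (j : ℕ) := exists_comp_eq_of_subsingleton_extMod (fun i => Fin (rk i) → R) hε
    hexact0 hexact j (hExt (j + 1) j.succ_pos)
  refine hGor (Module.Baer.of_forall_maximalIdeal ⟨3, h3⟩ fun f => ?_).injective
  rcases hsyz with ⟨-, ⟨e⟩⟩ | ⟨m, -, ⟨e⟩⟩
  · exact exists_mul_eq_of_residueField_summand e hε hexact0 (hdual 0) f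
  · refine exists_mul_eq_of_residueField_summand e (d m).surjective_rangeRestrict ?_
      (hdual (m + 1)) f
    rw [LinearMap.ker_rangeRestrict, hexact m]

/-- Over a commutative Noetherian local non-Gorenstein ring `(R, 𝔪, k)` with `𝔪³ = 0 ≠ 𝔪²`,
if in some minimal free resolution `⋯ → R^{rk 1} —d 0→ R^{rk 0} —ε→ M → 0` of a finitely
generated module `M` the `n`-th syzygy `Ω^n_R(M)` (which is `M` itself for `n = 0` and the image
of the differential `d m` for `n = m + 1`) contains a copy of the residue field `k` as a direct
summand, then `M` is not totally reflexive. -/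
theorem statement1
    (R : Type) [CommRing R] [IsNoetherianRing R] [IsLocalRing R]
    (hGor : ¬ Module.Injective R R)
    (h3 : (maximalIdeal R) ^ 3 = ⊥) (h2 : (maximalIdeal R) ^ 2 ≠ ⊥)
    (M : Type) [AddCommGroup M] [Module R M] [Module.Finite R M]
    (rk : ℕ → ℕ)
    (d : (i : ℕ) → ((Fin (rk (i + 1)) → R) →ₗ[R] (Fin (rk i) → R)))
    (ε : (Fin (rk 0) → R) →ₗ[R] M)
    (hε : Function.Surjective ε)
    (hexact0 : LinearMap.range (d 0) = LinearMap.ker ε)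
    (hexact : ∀ i : ℕ, LinearMap.range (d (i + 1)) = LinearMap.ker (d i))
    (hminε : LinearMap.ker ε ≤ (maximalIdeal R) • (⊤ : Submodule R (Fin (rk 0) → R)))
    (hmin : ∀ i : ℕ,
      LinearMap.range (d i) ≤ (maximalIdeal R) • (⊤ : Submodule R (Fin (rk i) → R)))
    (n : ℕ) (X : Type) [AddCommGroup X] [Module R X]
    (hsyz : (n = 0 ∧ Nonempty (M ≃ₗ[R] (ResidueField R × X))) ∨
      (∃ m : ℕ, n = m + 1 ∧
        Nonempty ((LinearMap.range (d m)) ≃ₗ[R] (ResidueField R × X)))) :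
    ¬ IsTotallyReflexive R M :=
  statement1_general R hGor h3 M rk d ε hε hexact0 hexact n X hsyz
end

section
/- Let k be a field and S = k[X,Y,Z]/(X^2, Y^2, Z^2, YZ) with x, y, z the images of X, Y, Z. For every α, β ∈ k, the pair (x + α y + β z, x − α y − β z) is an exact pair of zero divisors in S, i.e., (0 :_S (x + α y + β z)) = (x − α y − β z) and (0 :_S (x − α y − β z)) = (x + α y + β z). -/
/-- The defining ideal `(X², Y², Z², YZ)` of the ring `S = k[X,Y,Z]/(X², Y², Z², YZ)`. -/
noncomputable def sRel (k : Type) [Field k] : Ideal (MvPolynomial (Fin 3) k) :=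
  Ideal.span ({MvPolynomial.X 0 ^ 2, MvPolynomial.X 1 ^ 2, MvPolynomial.X 2 ^ 2,
    MvPolynomial.X 1 * MvPolynomial.X 2} : Set (MvPolynomial (Fin 3) k))

/-- The local `k`-algebra `S = k[X,Y,Z]/(X², Y², Z², YZ)`. -/
abbrev SRing (k : Type) [Field k] : Type := MvPolynomial (Fin 3) k ⧸ sRel k

/-- `x`, the image of `X` in `S`. -/
noncomputable def sx (k : Type) [Field k] : SRing k := Ideal.Quotient.mk _ (MvPolynomial.X 0)

/-- `y`, the image of `Y` in `S`. -/
noncomputable def sy (k : Type) [Field k] : SRing k := Ideal.Quotient.mk _ (MvPolynomial.X 1)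

/-- `z`, the image of `Z` in `S`. -/
noncomputable def sz (k : Type) [Field k] : SRing k := Ideal.Quotient.mk _ (MvPolynomial.X 2)

/-- `(a, b)` is an exact pair of zero divisors: `a`, `b` are non-units with
`(0 : a) = (b)` and `(0 : b) = (a)`. -/
def IsExactZeroDivisorPair (R : Type) [CommRing R] (a b : R) : Prop :=
  ¬ IsUnit a ∧ ¬ IsUnit b ∧
  (∀ x : R, x * a = 0 ↔ x ∈ Ideal.span ({b} : Set R)) ∧
  (∀ x : R, x * b = 0 ↔ x ∈ Ideal.span ({a} : Set R))

/-!
Sending `x ↦ ε`, `S` is the ring of dual numbers `A[ε]` over `A = k[Y,Z]/(Y², Z², YZ)`, and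
`ℓ = αy + βz` satisfies `ℓ² = 0` in `A`. In any `A[ε]` with `ℓ² = 0`, writing `u = p + qε` gives
`u (ε + ℓ) = pℓ + (p + qℓ)ε`, so `u` kills `ε + ℓ` exactly when `p = -qℓ`, i.e. when
`u = q (ε - ℓ)`; replacing `ℓ` by `-ℓ` gives the other annihilator.
-/

open DualNumber TrivSqZeroExt MvPolynomial

theorem IsExactZeroDivisorPair.map_ringEquiv {R R' : Type} [CommRing R] [CommRing R'] {a b : R}
    (h : IsExactZeroDivisorPair R a b) (e : R ≃+* R') :
    IsExactZeroDivisorPair R' (e a) (e b) := by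
  obtain ⟨ha, hb, hab, hba⟩ := h
  have transfer : ∀ c d : R, (∀ u : R, u * c = 0 ↔ u ∈ Ideal.span {d}) →
      ∀ u : R', u * e c = 0 ↔ u ∈ Ideal.span {e d} := by
    intro c d hcd u
    rw [← e.apply_symm_apply u, ← map_mul, map_eq_zero_iff e e.injective, hcd,
      Ideal.mem_span_singleton, Ideal.mem_span_singleton, map_dvd_iff]
  exact ⟨fun hu => ha (by simpa using hu.map e.symm), fun hu => hb (by simpa using hu.map e.symm),
    transfer a b hab, transfer b a hba⟩

theorem MvPolynomial.nontrivial_quotient_span {σ R : Type*} [CommRing R] [Nontrivial R]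
    {s : Set (MvPolynomial σ R)} (hs : ∀ p ∈ s, constantCoeff p = 0) :
    Nontrivial (MvPolynomial σ R ⧸ Ideal.span s) := by
  refine Ideal.Quotient.nontrivial_iff.2 fun htop => ?_
  have hle : Ideal.span s ≤ RingHom.ker (constantCoeff : MvPolynomial σ R →+* R) :=
    Ideal.span_le.2 hs
  simpa using hle (htop ▸ Submodule.mem_top : (1 : MvPolynomial σ R) ∈ Ideal.span s)

theorem MvPolynomial.aeval_eq_zero_of_mem_span {σ R B : Type*} [CommSemiring R] [CommSemiring B]
    [Algebra R B] {s : Set (MvPolynomial σ R)} {f : σ → B} (hs : ∀ p ∈ s, aeval f p = 0)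
    {p : MvPolynomial σ R} (hp : p ∈ Ideal.span s) : aeval f p = 0 :=
  (Ideal.span_le (I := RingHom.ker (aeval f : MvPolynomial σ R →ₐ[R] B))).2 hs hp

namespace DualNumber

variable {A : Type} [CommRing A] {ℓ : A}

theorem mul_eps_add_inl_eq_zero_iff (hℓ : ℓ ^ 2 = 0) (u : A[ε]) :
    u * (ε + inl ℓ) = 0 ↔ u ∈ Ideal.span {ε - inl ℓ} := by
  rw [Ideal.mem_span_singleton']
  constructor
  · intro hu
    have hsnd : u.fst + u.snd * ℓ = 0 := by simpa using congrArg snd hu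
    refine ⟨inl u.snd, ?_⟩
    ext <;> simp [eq_neg_of_add_eq_zero_left hsnd]
  · rintro ⟨v, rfl⟩
    have : (ε - inl ℓ) * (ε + inl ℓ : A[ε]) = 0 := by
      rw [mul_comm, ← sq_sub_sq, eps_pow_two, inl_pow, hℓ, inl_zero, sub_zero]
    rw [mul_assoc, this, mul_zero]

theorem not_isUnit_eps_add_inl [Nontrivial A] (hℓ : ℓ ^ 2 = 0) : ¬ IsUnit (ε + inl ℓ : A[ε]) := by
  rw [isUnit_iff_isUnit_fst]
  simpa using (show IsNilpotent ℓ from ⟨2, hℓ⟩).not_isUnit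

theorem isExactZeroDivisorPair_eps_add_inl [Nontrivial A] (hℓ : ℓ ^ 2 = 0) :
    IsExactZeroDivisorPair A[ε] (ε + inl ℓ) (ε - inl ℓ) := by
  have hℓ' : (-ℓ) ^ 2 = 0 := by rw [neg_sq, hℓ]
  have hsub : ∀ m : A, (ε - inl m : A[ε]) = ε + inl (-m) := fun m => by
    rw [inl_neg, sub_eq_add_neg]
  refine ⟨not_isUnit_eps_add_inl hℓ, hsub ℓ ▸ not_isUnit_eps_add_inl hℓ',
    mul_eps_add_inl_eq_zero_iff hℓ, ?_⟩
  simpa only [hsub, neg_neg] using mul_eps_add_inl_eq_zero_iff hℓ'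

end DualNumber

noncomputable def yzRel (R : Type) [CommRing R] : Ideal (MvPolynomial (Fin 2) R) :=
  Ideal.span {X 0 ^ 2, X 1 ^ 2, X 0 * X 1}

abbrev YZRing (R : Type) [CommRing R] : Type := MvPolynomial (Fin 2) R ⧸ yzRel R

namespace YZRing

variable (R : Type) [CommRing R]

noncomputable def y : YZRing R := Ideal.Quotient.mk _ (X 0)

noncomputable def z : YZRing R := Ideal.Quotient.mk _ (X 1)

instance [Nontrivial R] : Nontrivial (YZRing R) := by
  rw [YZRing, yzRel]
  exact nontrivial_quotient_span (by simp)

theorem y_sq : y R ^ 2 = 0 := Ideal.Quotient.eq_zero_iff_mem.2 (Ideal.subset_span (by simp))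

theorem z_sq : z R ^ 2 = 0 := Ideal.Quotient.eq_zero_iff_mem.2 (Ideal.subset_span (by simp))

theorem y_mul_z : y R * z R = 0 := Ideal.Quotient.eq_zero_iff_mem.2 (Ideal.subset_span (by simp))

theorem smul_y_add_smul_z_sq (a b : R) : (a • y R + b • z R) ^ 2 = 0 := by
  simp [add_sq, smul_pow, mul_assoc, smul_mul_smul_comm, y_sq, z_sq, y_mul_z]

end YZRing

section SRing

variable (k : Type) [Field k]

theorem sx_sq : sx k ^ 2 = 0 := Ideal.Quotient.eq_zero_iff_mem.2 (Ideal.subset_span (by simp))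

theorem sy_sq : sy k ^ 2 = 0 := Ideal.Quotient.eq_zero_iff_mem.2 (Ideal.subset_span (by simp))

theorem sz_sq : sz k ^ 2 = 0 := Ideal.Quotient.eq_zero_iff_mem.2 (Ideal.subset_span (by simp))

theorem sy_mul_sz : sy k * sz k = 0 := Ideal.Quotient.eq_zero_iff_mem.2 (Ideal.subset_span (by simp))

noncomputable def dualGen : Fin 3 → (YZRing k)[ε] := ![ε, inl (YZRing.y k), inl (YZRing.z k)]

theorem aeval_dualGen_eq_zero_of_mem_sRel {p : MvPolynomial (Fin 3) k} (hp : p ∈ sRel k) :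
    aeval (dualGen k) p = 0 := by
  rw [sRel] at hp
  refine aeval_eq_zero_of_mem_span ?_ hp
  simp only [Set.mem_insert_iff, Set.mem_singleton_iff, forall_eq_or_imp, forall_eq]
  simp only [map_pow, map_mul, aeval_X, dualGen]
  refine ⟨eps_pow_two, ?_, ?_, ?_⟩ <;>
    simp only [Matrix.cons_val, inl_pow, ← inl_mul, YZRing.y_sq, YZRing.z_sq, YZRing.y_mul_z,
      inl_zero]

theorem aeval_yz_eq_zero_of_mem_yzRel {p : MvPolynomial (Fin 2) k} (hp : p ∈ yzRel k) :
    aeval ![sy k, sz k] p = 0 := by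
  rw [yzRel] at hp
  refine aeval_eq_zero_of_mem_span ?_ hp
  simp only [Set.mem_insert_iff, Set.mem_singleton_iff, forall_eq_or_imp, forall_eq]
  simp only [map_pow, map_mul, aeval_X]
  exact ⟨sy_sq k, sz_sq k, sy_mul_sz k⟩

noncomputable def sRingToDual : SRing k →ₐ[k] (YZRing k)[ε] :=
  Ideal.Quotient.liftₐ (sRel k) (aeval (dualGen k)) fun _ => aeval_dualGen_eq_zero_of_mem_sRel k

@[simp]
theorem sRingToDual_mk (p : MvPolynomial (Fin 3) k) :
    sRingToDual k (Ideal.Quotient.mk _ p) = aeval (dualGen k) p :=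
  Ideal.Quotient.lift_mk _ _ _

noncomputable def yzRingToSRing : YZRing k →ₐ[k] SRing k :=
  Ideal.Quotient.liftₐ (yzRel k) (aeval ![sy k, sz k]) fun _ => aeval_yz_eq_zero_of_mem_yzRel k

@[simp]
theorem yzRingToSRing_mk (p : MvPolynomial (Fin 2) k) :
    yzRingToSRing k (Ideal.Quotient.mk _ p) = aeval ![sy k, sz k] p :=
  Ideal.Quotient.lift_mk _ _ _

noncomputable def dualToSRing : (YZRing k)[ε] →ₐ[k] SRing k :=
  DualNumber.lift ⟨(yzRingToSRing k, sx k), by rw [← sq, sx_sq], fun _ => Commute.all _ _⟩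

noncomputable def sRingEquivDual : SRing k ≃ₐ[k] (YZRing k)[ε] :=
  AlgEquiv.ofAlgHom (sRingToDual k) (dualToSRing k)
    (by
      refine DualNumber.lift.symm.injective (Subtype.ext (Prod.ext ?_ ?_))
      · apply Ideal.Quotient.algHom_ext
        apply MvPolynomial.algHom_ext
        intro i
        fin_cases i <;> simp [dualToSRing, dualGen, sy, sz, YZRing.y, YZRing.z]
      · simp [dualToSRing, dualGen, sx])
    (by
      apply Ideal.Quotient.algHom_ext
      apply MvPolynomial.algHom_ext
      intro i
      fin_cases i <;> simp [dualToSRing, dualGen, sx, sy, sz, YZRing.y, YZRing.z])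

@[simp]
theorem sRingEquivDual_sx : sRingEquivDual k (sx k) = ε := by
  simp [sRingEquivDual, sx, dualGen]

@[simp]
theorem sRingEquivDual_sy : sRingEquivDual k (sy k) = inl (YZRing.y k) := by
  simp [sRingEquivDual, sy, dualGen]

@[simp]
theorem sRingEquivDual_sz : sRingEquivDual k (sz k) = inl (YZRing.z k) := by
  simp [sRingEquivDual, sz, dualGen]

end SRing

/-- In `S = k[X,Y,Z]/(X²,Y²,Z²,YZ)`, for every `α, β ∈ k` the pair
`(x + αy + βz, x − αy − βz)` is an exact pair of zero divisors. -/
theorem statement10 (k : Type) [Field k] (α β : k) :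
    IsExactZeroDivisorPair (SRing k)
      (sx k + α • sy k + β • sz k) (sx k - α • sy k - β • sz k) := by
  let e := sRingEquivDual k
  let ℓ := α • YZRing.y k + β • YZRing.z k
  have hpair : IsExactZeroDivisorPair (SRing k) (e.symm (ε + inl ℓ)) (e.symm (ε - inl ℓ)) :=
    (isExactZeroDivisorPair_eps_add_inl (YZRing.smul_y_add_smul_z_sq k α β)).map_ringEquiv
      e.symm.toRingEquiv
  have ha : e.symm (ε + inl ℓ) = sx k + α • sy k + β • sz k := by
    rw [e.symm_apply_eq]
    simp [e, ℓ, add_assoc]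
  have hb : e.symm (ε - inl ℓ) = sx k - α • sy k - β • sz k := by
    rw [e.symm_apply_eq]
    simp [e, ℓ, sub_sub]
  rwa [ha, hb] at hpair
end

section
/- Let k be a field of characteristic 0 and S = k[X,Y,Z]/(X^2, Y^2, Z^2, YZ) with x, y, z the images of X, Y, Z. The S-module T = coker [[x, z], [y, x]] is not isomorphic to the cokernel of any 2×2 upper triangular matrix with entries in the maximal ideal of S; equivalently, there do not exist invertible 2×2 matrices P, Q over S such that P · [[x, z], [y, x]] · Q is upper triangular. -/
set_option synthInstance.maxHeartbeats 1000000
set_option maxHeartbeats 1000000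

/-- The cokernel of a `2×2` matrix over `S`, acting on column vectors `S² → S²`. -/
abbrev coker2 (k : Type) [Field k] (A : Matrix (Fin 2) (Fin 2) (SRing k)) : Type :=
  (Fin 2 → SRing k) ⧸ LinearMap.range A.mulVecLin

/-!
Write `f̄` for the residue of `f ∈ S` modulo `m`, and for each variable `v ∈ {x, y, z}` let
`∂ᵥ f` be the coefficient of `v` in the linear part of `f`; it is computed by the algebra map
`S → k[ε]` sending `v` to `ε` and the other variables to `0`, so
`∂ᵥ (f g) = f̄ ∂ᵥ g + ∂ᵥ f ḡ`. If the entries of `A` lie in `m` this gives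
`∂ᵥ (P A Q) = P̄ (∂ᵥ A) Q̄`. For `A = [[x, z], [y, x]]` the three linear parts are `1`, `E₂₁` and
`E₁₂`, and the vanishing of the `(2,1)` entry of `P A Q` says that the second row `(a, b)` of `P̄`
and the first column `(c, d)` of `Q̄` satisfy `ac + bd = bc = ad = 0`, which over a field forces
one of them to vanish: `P` or `Q` is not invertible.

An isomorphism `coker A ≃ coker U` lifts to matrices `F, G` with `F A = U C` and
`G F = 1 + A W`; as `Ā = 0`, `F̄` is invertible. If also `Ū = 0`, then taking `∂ₓ` of
`F A = U C` gives `F̄ = (∂ₓ U) C̄`, so `C` is invertible and `U = F A C⁻¹`.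
-/

open MvPolynomial DualNumber Matrix

theorem Matrix.exists_mul_eq_of_range_mulVecLin_le {R : Type*} [CommRing R] {l m n : Type*}
    [Fintype l] [Fintype n] [DecidableEq l] [DecidableEq n] {U : Matrix m l R}
    {B : Matrix m n R} (h : LinearMap.range B.mulVecLin ≤ LinearMap.range U.mulVecLin) :
    ∃ C : Matrix l n R, U * C = B := by
  obtain ⟨g, hg⟩ := Module.projective_lifting_property U.mulVecLin.rangeRestrict
    (B.mulVecLin.codRestrict _ fun w => h ⟨w, rfl⟩) U.mulVecLin.surjective_rangeRestrict
  refine ⟨LinearMap.toMatrix' g, Matrix.toLin'.injective (LinearMap.ext fun w => ?_)⟩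
  simpa [Matrix.toLin'_mul] using congrArg Subtype.val (LinearMap.congr_fun hg w)

theorem Matrix.exists_mulVec_lift {R : Type*} [CommRing R] {l m n : Type*} [Fintype l]
    [Fintype m] [DecidableEq m] {A : Matrix m l R} {U : Matrix n l R}
    (e : ((m → R) ⧸ LinearMap.range A.mulVecLin) →ₗ[R] (n → R) ⧸ LinearMap.range U.mulVecLin) :
    ∃ F : Matrix n m R, ∀ w, Submodule.Quotient.mk (F *ᵥ w) = e (Submodule.Quotient.mk w) := by
  obtain ⟨g, hg⟩ := Module.projective_lifting_property (LinearMap.range U.mulVecLin).mkQ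
    (e ∘ₗ (LinearMap.range A.mulVecLin).mkQ) (Submodule.mkQ_surjective _)
  exact ⟨LinearMap.toMatrix' g, fun w => by simpa using LinearMap.congr_fun hg w⟩

theorem Matrix.det_eq_zero_or_det_eq_zero_of_fin_two {K : Type*} [Field K]
    {p q : Matrix (Fin 2) (Fin 2) K} (hx : (p * q) 1 0 = 0)
    (hy : (p * !![0, 0; 1, (0 : K)] * q) 1 0 = 0) (hz : (p * !![0, 1; 0, (0 : K)] * q) 1 0 = 0) :
    p.det = 0 ∨ q.det = 0 := by
  simp only [Matrix.mul_apply, Fin.sum_univ_two, Matrix.of_apply, Matrix.cons_val',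
    Matrix.cons_val_fin_one, Matrix.cons_val_zero, Matrix.cons_val_one, mul_zero, mul_one,
    zero_add, add_zero, zero_mul] at hx hy hz
  have : (p 1 0 = 0 ∧ p 1 1 = 0) ∨ (q 0 0 = 0 ∧ q 1 0 = 0) := by grind
  rcases this with ⟨h0, h1⟩ | ⟨h0, h1⟩ <;> simp [Matrix.det_fin_two, h0, h1]

namespace SRing

variable {k : Type} [Field k]

section Lift

variable {B : Type*} [CommRing B] [Algebra k B]

variable (k) in
noncomputable def lift (v : Fin 3 → B) (hv : ∀ i, v i ^ 2 = 0) (h12 : v 1 * v 2 = 0) :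
    SRing k →ₐ[k] B :=
  Ideal.Quotient.liftₐ (sRel k) (aeval v) fun p hp => by
    refine (Ideal.span_le (I := RingHom.ker (aeval v)) |>.mpr ?_) hp
    rintro q (rfl | rfl | rfl | rfl) <;> simp [hv, h12]

variable (v : Fin 3 → B) (hv : ∀ i, v i ^ 2 = 0) (h12 : v 1 * v 2 = 0)

theorem lift_mk (p : MvPolynomial (Fin 3) k) :
    lift k v hv h12 (Ideal.Quotient.mk _ p) = aeval v p := rfl

@[simp] theorem lift_sx : lift k v hv h12 (sx k) = v 0 := by simp [sx, lift_mk]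
@[simp] theorem lift_sy : lift k v hv h12 (sy k) = v 1 := by simp [sy, lift_mk]
@[simp] theorem lift_sz : lift k v hv h12 (sz k) = v 2 := by simp [sz, lift_mk]

end Lift

variable (k) in
noncomputable def residue : SRing k →ₐ[k] k := lift k 0 (by simp) (by simp)

variable (k) in
noncomputable def toDualNumber (i : Fin 3) : SRing k →ₐ[k] k[ε] :=
  lift k (Pi.single i ε) (fun j => by rcases eq_or_ne j i with rfl | h <;> simp [sq, *])
    (by fin_cases i <;> simp)

variable (k) in
noncomputable def linearCoeff (i : Fin 3) : SRing k →ₗ[k] k :=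
  TrivSqZeroExt.sndHom k k ∘ₗ (toDualNumber k i).toLinearMap

@[simp] theorem residue_sx : residue k (sx k) = 0 := by simp [residue]
@[simp] theorem residue_sy : residue k (sy k) = 0 := by simp [residue]
@[simp] theorem residue_sz : residue k (sz k) = 0 := by simp [residue]

theorem fst_toDualNumber (i : Fin 3) (f : SRing k) : (toDualNumber k i f).fst = residue k f := by
  suffices (TrivSqZeroExt.fstHom k k k).comp (toDualNumber k i) = residue k from
    AlgHom.congr_fun this f
  refine Ideal.Quotient.algHom_ext _ (MvPolynomial.algHom_ext fun j => ?_)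
  rcases eq_or_ne j i with rfl | h <;> simp [toDualNumber, residue, lift_mk, *]

theorem linearCoeff_mul (i : Fin 3) (f g : SRing k) :
    linearCoeff k i (f * g) =
      residue k f * linearCoeff k i g + linearCoeff k i f * residue k g := by
  simp [linearCoeff, fst_toDualNumber]

theorem residue_eq_zero_of_mem_span {f : SRing k}
    (hf : f ∈ Ideal.span {sx k, sy k, sz k}) : residue k f = 0 := by
  refine (Ideal.span_le (I := RingHom.ker (residue k)) |>.mpr ?_) hf
  rintro g (rfl | rfl | rfl) <;> simp

theorem ker_residue_le_nilradical : RingHom.ker (residue k) ≤ nilradical (SRing k) := by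
  intro f hf
  obtain ⟨p, rfl⟩ := Ideal.Quotient.mk_surjective f
  have hp : p ∈ Ideal.span (X '' Set.univ) := by
    refine mem_ideal_span_X_image.mpr fun m hm => ?_
    obtain ⟨j, hj⟩ : ∃ j, m j ≠ 0 := by
      by_contra! h
      obtain rfl : m = 0 := Finsupp.ext h
      exact mem_support_iff.mp hm (by simpa [residue, lift_mk, constantCoeff] using hf)
    exact ⟨j, trivial, hj⟩
  have := Ideal.mem_map_of_mem (Ideal.Quotient.mk (sRel k)) hp
  rw [Ideal.map_span] at this
  refine (Ideal.span_le (I := nilradical _) |>.mpr ?_) this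
  rintro _ ⟨_, ⟨j, -, rfl⟩, rfl⟩
  refine ⟨2, Ideal.Quotient.eq_zero_iff_mem.mpr (Ideal.subset_span ?_)⟩
  fin_cases j <;> simp

theorem isUnit_of_residue_ne_zero {f : SRing k} (hf : residue k f ≠ 0) : IsUnit f := by
  have hnil : IsNilpotent (f - algebraMap k _ (residue k f)) :=
    ker_residue_le_nilradical (by simp [RingHom.mem_ker])
  simpa using hnil.isUnit_add_right_of_commute
    ((isUnit_iff_ne_zero.mpr hf).map (algebraMap k (SRing k))) (Commute.all _ _)

section Matrix

variable {l m n : Type*}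

theorem isUnit_of_isUnit_map_residue [Fintype n] [DecidableEq n] {M : Matrix n n (SRing k)}
    (hM : IsUnit (M.map (residue k))) : IsUnit M := by
  rw [Matrix.isUnit_iff_isUnit_det] at hM ⊢
  rw [← AlgHom.mapMatrix_apply, ← AlgHom.map_det] at hM
  exact isUnit_of_residue_ne_zero hM.ne_zero

theorem map_residue_mul [Fintype m] (M : Matrix l m (SRing k)) (N : Matrix m n (SRing k)) :
    (M * N).map (residue k) = M.map (residue k) * N.map (residue k) :=
  Matrix.map_mul (f := (residue k : SRing k →+* k))

theorem map_linearCoeff_mul [Fintype m] (i : Fin 3) (M : Matrix l m (SRing k))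
    (N : Matrix m n (SRing k)) :
    (M * N).map (linearCoeff k i) = M.map (residue k) * N.map (linearCoeff k i) +
      M.map (linearCoeff k i) * N.map (residue k) := by
  ext a b
  simp [Matrix.mul_apply, linearCoeff_mul, Finset.sum_add_distrib]

theorem map_linearCoeff_mul_mul_of_map_residue_eq_zero [Fintype m] [Fintype n] (i : Fin 3)
    {A : Matrix m n (SRing k)} (hA : A.map (residue k) = 0) (P : Matrix l m (SRing k))
    (Q : Matrix n n (SRing k)) :
    (P * A * Q).map (linearCoeff k i) =
      P.map (residue k) * A.map (linearCoeff k i) * Q.map (residue k) := by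
  simp only [map_linearCoeff_mul, map_residue_mul, hA, Matrix.mul_zero, Matrix.zero_mul,
    add_zero, zero_add]

theorem exists_isUnit_mul_mul_eq_of_linearEquiv [Fintype n] [DecidableEq n]
    {A U : Matrix n n (SRing k)} (hA : A.map (residue k) = 0) {i : Fin 3}
    (hAi : IsUnit (A.map (linearCoeff k i))) (hU : U.map (residue k) = 0)
    (e : ((n → SRing k) ⧸ LinearMap.range A.mulVecLin) ≃ₗ[SRing k]
      (n → SRing k) ⧸ LinearMap.range U.mulVecLin) :
    ∃ P Q : Matrix n n (SRing k), IsUnit P ∧ IsUnit Q ∧ P * A * Q = U := by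
  obtain ⟨F, hF⟩ := Matrix.exists_mulVec_lift e.toLinearMap
  obtain ⟨G, hG⟩ := Matrix.exists_mulVec_lift e.symm.toLinearMap
  obtain ⟨C, hC⟩ : ∃ C, U * C = F * A := by
    refine Matrix.exists_mul_eq_of_range_mulVecLin_le ?_
    rintro _ ⟨w, rfl⟩
    have hAw :
        (Submodule.Quotient.mk (A *ᵥ w) : (n → SRing k) ⧸ LinearMap.range A.mulVecLin) = 0 :=
      (Submodule.Quotient.mk_eq_zero _).mpr ⟨w, rfl⟩
    rw [← Submodule.Quotient.mk_eq_zero, Matrix.mulVecLin_apply, ← Matrix.mulVec_mulVec, hF, hAw,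
      map_zero]
  obtain ⟨W, hW⟩ : ∃ W, A * W = G * F - 1 := by
    refine Matrix.exists_mul_eq_of_range_mulVecLin_le ?_
    rintro _ ⟨w, rfl⟩
    rw [← Submodule.Quotient.mk_eq_zero, Matrix.mulVecLin_apply, Matrix.sub_mulVec,
      Matrix.one_mulVec, Submodule.Quotient.mk_sub, ← Matrix.mulVec_mulVec, hG, hF,
      LinearEquiv.coe_coe, LinearEquiv.coe_coe, LinearEquiv.symm_apply_apply, sub_self]
  have hGF : G.map (residue k) * F.map (residue k) = 1 := by
    rw [← map_residue_mul, show G * F = 1 + A * W by rw [hW]; abel]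
    simp [Matrix.map_add, hA]
  have hFunit : IsUnit (F.map (residue k)) :=
    (Matrix.isUnit_iff_isUnit_det _).mpr (Matrix.isUnit_det_of_left_inverse hGF)
  have hlin : U.map (linearCoeff k i) * C.map (residue k) =
      F.map (residue k) * A.map (linearCoeff k i) := by
    simpa [map_linearCoeff_mul, hA, hU] using congrArg (Matrix.map · (linearCoeff k i)) hC
  have hCunit : IsUnit C := by
    refine isUnit_of_isUnit_map_residue ((Matrix.isUnit_iff_isUnit_det _).mpr ?_)
    have := (Matrix.isUnit_iff_isUnit_det _).mp (hFunit.mul hAi)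
    rw [← hlin, Matrix.det_mul] at this
    exact isUnit_of_mul_isUnit_right this
  refine ⟨F, C⁻¹, isUnit_of_isUnit_map_residue hFunit,
    Matrix.isUnit_nonsing_inv_iff.mpr hCunit, ?_⟩
  rw [← hC, Matrix.mul_assoc, Matrix.mul_nonsing_inv _ ((Matrix.isUnit_iff_isUnit_det C).mp hCunit),
    Matrix.mul_one]

end Matrix

end SRing

open SRing

section PresT

variable {k : Type} [Field k]

variable (k) in
noncomputable def presT : Matrix (Fin 2) (Fin 2) (SRing k) := !![sx k, sz k; sy k, sx k]

theorem map_residue_presT : (presT k).map (residue k) = 0 := by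
  ext i j; fin_cases i <;> fin_cases j <;> simp [presT]

theorem map_linearCoeff_zero_presT : (presT k).map (linearCoeff k 0) = 1 := by
  ext i j; fin_cases i <;> fin_cases j <;> simp [presT, linearCoeff, toDualNumber]

theorem map_linearCoeff_one_presT : (presT k).map (linearCoeff k 1) = !![0, 0; 1, 0] := by
  ext i j; fin_cases i <;> fin_cases j <;> simp [presT, linearCoeff, toDualNumber]

theorem map_linearCoeff_two_presT : (presT k).map (linearCoeff k 2) = !![0, 1; 0, 0] := by
  ext i j; fin_cases i <;> fin_cases j <;> simp [presT, linearCoeff, toDualNumber]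

theorem mul_presT_mul_apply_one_zero_ne_zero {P Q : Matrix (Fin 2) (Fin 2) (SRing k)}
    (hP : IsUnit P) (hQ : IsUnit Q) : (P * presT k * Q) 1 0 ≠ 0 := by
  intro h
  have hcoeff (i : Fin 3) :
      (P.map (residue k) * (presT k).map (linearCoeff k i) * Q.map (residue k)) 1 0 = 0 := by
    rw [← map_linearCoeff_mul_mul_of_map_residue_eq_zero i map_residue_presT, Matrix.map_apply,
      h, map_zero]
  have hx := hcoeff 0
  have hy := hcoeff 1
  have hz := hcoeff 2
  rw [map_linearCoeff_zero_presT, Matrix.mul_one] at hx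
  rw [map_linearCoeff_one_presT] at hy
  rw [map_linearCoeff_two_presT] at hz
  have hdet (M : Matrix (Fin 2) (Fin 2) (SRing k)) (hM : IsUnit M) :
      (M.map (residue k)).det ≠ 0 :=
    ((Matrix.isUnit_iff_isUnit_det _).mp (hM.map (residue k).mapMatrix)).ne_zero
  rcases Matrix.det_eq_zero_or_det_eq_zero_of_fin_two hx hy hz with h' | h'
  exacts [hdet P hP h', hdet Q hQ h']

end PresT


theorem statement13_general (k : Type) [Field k] :
    (∀ U : Matrix (Fin 2) (Fin 2) (SRing k),
      (∀ i j : Fin 2, U i j ∈ Ideal.span ({sx k, sy k, sz k} : Set (SRing k))) →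
      U 1 0 = 0 →
      ¬ Nonempty ((coker2 k !![sx k, sz k; sy k, sx k]) ≃ₗ[SRing k] coker2 k U)) ∧
    (¬ ∃ P Q : Matrix (Fin 2) (Fin 2) (SRing k),
      IsUnit P ∧ IsUnit Q ∧ (P * !![sx k, sz k; sy k, sx k] * Q) 1 0 = 0) := by
  constructor
  · rintro U hU hU10 ⟨e⟩
    have hUres : U.map (residue k) = 0 := by
      ext i j
      exact residue_eq_zero_of_mem_span (hU i j)
    have hAx : IsUnit ((presT k).map (linearCoeff k 0)) := by
      rw [map_linearCoeff_zero_presT]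
      exact isUnit_one
    obtain ⟨P, Q, hP, hQ, rfl⟩ :=
      exists_isUnit_mul_mul_eq_of_linearEquiv map_residue_presT hAx hUres e
    exact mul_presT_mul_apply_one_zero_ne_zero hP hQ hU10
  · rintro ⟨P, Q, hP, hQ, h⟩
    exact mul_presT_mul_apply_one_zero_ne_zero hP hQ h

/-- For a field `k` of characteristic `0` and `S = k[X,Y,Z]/(X²,Y²,Z²,YZ)` with maximal ideal
`m = (x, y, z)`, the module `T = coker [[x, z], [y, x]]` is not isomorphic to the cokernel of
any `2×2` upper triangular matrix with entries in `m`; equivalently, there are no invertible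
`2×2` matrices `P, Q` over `S` such that `P · [[x, z], [y, x]] · Q` is upper triangular. -/
theorem statement13 (k : Type) [Field k] [CharZero k] :
    (∀ U : Matrix (Fin 2) (Fin 2) (SRing k),
      (∀ i j : Fin 2, U i j ∈ Ideal.span ({sx k, sy k, sz k} : Set (SRing k))) →
      U 1 0 = 0 →
      ¬ Nonempty ((coker2 k !![sx k, sz k; sy k, sx k]) ≃ₗ[SRing k] coker2 k U)) ∧
    (¬ ∃ P Q : Matrix (Fin 2) (Fin 2) (SRing k),
      IsUnit P ∧ IsUnit Q ∧ (P * !![sx k, sz k; sy k, sx k] * Q) 1 0 = 0) :=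
  statement13_general k
end
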